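/- arXiv:2005.04354 — 2 statements merged into one kernel-verified Lean document; each statement's English description precedes it below -/
import Mathlib

section
/- Let X be a finite set, P a probability mass function on X, and g : X → {−1, 0, 1} a function such that P({x : g(x) = 1}) > 0 and ∑_{x∈X} g(x)·P(x) < 0. Then the minimum of the Kullback–Leibler divergence D(Q‖P) over all probability mass functions Q on X satisfying ∑_{x∈X} g(x)·Q(x) ≥ 0 equals −log( P({x : g(x) = 0}) + 2·√( P({x : g(x) = 1}) · P({x : g(x) = −1}) ) ), and it is attained by the tilted distribution Q*(x) = P(x)·e^{λg(x)} / ∑_y P(y)·e^{λg(y)} with λ = (1/2)·log( P({g = −1}) / P({g = 1}) ). -/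
/-! Gibbs' variational principle: for the tilted law `P_f ∝ P e^f` with normaliser `Z(f)`,
`D(Q‖P) = D(Q‖P_f) + E_Q f - log Z(f)`, so `D(Q‖P) ≥ E_Q f - log Z(f)` with equality at `Q = P_f`.
Taking `f = λ g` with `λ ≥ 0` bounds `D(Q‖P)` below by `-log Z(λ g)` whenever `E_Q g ≥ 0`, and the
bound is attained if `E_{P_{λg}} g = 0`. For `g` with values in `{-1, 0, 1}` this balance condition
reads `e^λ P(g = 1) = e^{-λ} P(g = -1)`, which the given `λ` solves (and `λ ≥ 0` because
`P(g = -1) > P(g = 1)`); then both sides equal `√(P(g = 1) P(g = -1))`, so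
`Z = P(g = 0) + 2 √(P(g = 1) P(g = -1))`. -/

open scoped Classical BigOperators
open Filter

noncomputable section

/-- Symmetric pair weight `w(x i, x j)` lifted to unordered pairs. -/
def pairWeight (θ : ℝ) {p : ℕ} (x : Fin p → Bool) : Sym2 (Fin p) → ℝ :=
  Sym2.lift ⟨fun i j => if x i = x j then 1 - θ else θ, fun i j => by
    dsimp only
    by_cases h : x i = x j
    · rw [if_pos h, if_pos h.symm]
    · rw [if_neg h, if_neg (fun hh => h hh.symm)]⟩

/-- The homogeneous zero-external-field Ising tree distribution. -/
def isingP (θ : ℝ) {p : ℕ} (T : SimpleGraph (Fin p)) (x : Fin p → Bool) : ℝ :=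
  (1 / 2) * ∏ e ∈ T.edgeFinset, pairWeight θ x e

/-- Probability of an event `A` about `n` i.i.d. samples from pmf `P`. -/
def iidProb {p : ℕ} (P : (Fin p → Bool) → ℝ) (n : ℕ)
    (A : Set (Fin n → Fin p → Bool)) : ℝ :=
  ∑ xs : Fin n → Fin p → Bool, if xs ∈ A then ∏ k, P (xs k) else 0

/-- Empirical agreement weight. -/
def Ahat {p n : ℕ} (xs : Fin n → Fin p → Bool) (i j : Fin p) : ℝ :=
  ((Finset.univ.filter (fun k : Fin n => xs k i = xs k j)).card : ℝ) / n

/-- Empirical agreement weight on unordered pairs. -/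
def AhatSym {p n : ℕ} (xs : Fin n → Fin p → Bool) : Sym2 (Fin p) → ℝ :=
  Sym2.lift ⟨fun i j => Ahat xs i j, fun i j => by
    have h : (Finset.univ.filter fun k : Fin n => xs k i = xs k j)
        = (Finset.univ.filter fun k : Fin n => xs k j = xs k i) :=
      Finset.filter_congr (fun k _ => ⟨Eq.symm, Eq.symm⟩)
    simp only [Ahat, h]⟩

/-- The path (Markov chain) tree on 3 nodes with edges {1,2},{2,3}. -/
def chainA : SimpleGraph (Fin 3) := SimpleGraph.fromEdgeSet {s(0,1), s(1,2)}

def chainB : SimpleGraph (Fin 3) := SimpleGraph.fromEdgeSet {s(0,2), s(1,2)}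

def chainC : SimpleGraph (Fin 3) := SimpleGraph.fromEdgeSet {s(0,1), s(0,2)}

def path4 : SimpleGraph (Fin 4) := SimpleGraph.fromEdgeSet {s(0,1), s(1,2), s(2,3)}

def Kexp (θ : ℝ) : ℝ := -Real.log (1 - θ * (1 - Real.sqrt (4 * θ * (1 - θ))))

def sigmaSq (θ : ℝ) : ℝ := θ * Real.sqrt (4 * θ * (1 - θ)) * Real.exp (Kexp θ)

def zTheta (θ : ℝ) : ℝ := Real.sqrt (θ / (1 - θ))

def ftilde (θ : ℝ) (n : ℕ) : ℝ :=
  Real.exp (-(n : ℝ) * Kexp θ) / Real.sqrt (2 * Real.pi * sigmaSq θ * n)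
    * (1 + (1 - 3 * sigmaSq θ) / (8 * sigmaSq θ * n))

def fn (θ : ℝ) (n : ℕ) : ℝ :=
  ftilde θ n / (1 - zTheta θ)
    * (1 - zTheta θ * (1 + zTheta θ) / (2 * (1 - zTheta θ) ^ 2 * sigmaSq θ * n))

/-- Hamming distance. -/
def hamming {p : ℕ} (x y : Fin p → Bool) : ℕ :=
  (Finset.univ.filter (fun i => x i ≠ y i)).card

/-- Noisy (BSC with crossover probability q) version of a distribution. -/
def noisy (q : ℝ) {p : ℕ} (P : (Fin p → Bool) → ℝ) (y : Fin p → Bool) : ℝ :=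
  ∑ x : Fin p → Bool, q ^ hamming x y * (1 - q) ^ (p - hamming x y) * P x

def beta1 (θ q : ℝ) : ℝ :=
  ((1 - q) ^ 3 + q ^ 3) * (θ * (1 - θ) / 2) + q * (1 - q) * ((1 - θ * (1 - θ)) / 2)

def beta2 (θ q : ℝ) : ℝ :=
  ((1 - q) ^ 3 + q ^ 3) * (θ ^ 2 / 2) + q * (1 - q) * ((1 - θ ^ 2) / 2)

def Kq (θ q : ℝ) : ℝ :=
  -Real.log (1 - 4 * ((beta1 θ q + beta2 θ q) / 2 - Real.sqrt (beta1 θ q * beta2 θ q)))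

def mu2 (θ q : ℝ) : ℝ := 4 * Real.sqrt (beta1 θ q * beta2 θ q) * Real.exp (Kq θ q)

def zq (θ q : ℝ) : ℝ := Real.sqrt (beta2 θ q / beta1 θ q)

def ftildeq (θ q : ℝ) (n : ℕ) : ℝ :=
  Real.exp (-(n : ℝ) * Kq θ q) / Real.sqrt (2 * Real.pi * mu2 θ q * n)
    * (1 + (1 - 3 * mu2 θ q) / (8 * mu2 θ q * n))

def fnq (θ q : ℝ) (n : ℕ) : ℝ :=
  ftildeq θ q n / (1 - zq θ q)
    * (1 - zq θ q * (1 + zq θ q) / (2 * (1 - zq θ q) ^ 2 * mu2 θ q * n))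

/-- Marginal of a pmf on `{0,1}^p` on a single coordinate. -/
def marg1 {p : ℕ} (Q : (Fin p → Bool) → ℝ) (i : Fin p) (a : Bool) : ℝ :=
  ∑ x ∈ Finset.univ.filter (fun x : Fin p → Bool => x i = a), Q x

/-- Marginal of a pmf on `{0,1}^p` on a pair of coordinates. -/
def marg2 {p : ℕ} (Q : (Fin p → Bool) → ℝ) (i j : Fin p) (a b : Bool) : ℝ :=
  ∑ x ∈ Finset.univ.filter (fun x : Fin p → Bool => x i = a ∧ x j = b), Q x

/-- Kullback-Leibler divergence between pmfs on a finite type. -/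
def klDiv {X : Type*} [Fintype X] (Q P : X → ℝ) : ℝ :=
  ∑ x : X, Q x * Real.log (Q x / P x)

/-- Empirical mutual information between coordinates `i` and `j`. -/
def mutInf {p : ℕ} (Q : (Fin p → Bool) → ℝ) (i j : Fin p) : ℝ :=
  ∑ a : Bool, ∑ b : Bool,
    marg2 Q i j a b * Real.log (marg2 Q i j a b / (marg1 Q i a * marg1 Q j b))

end

open Real Finset

section Tilt

variable {X : Type*} [Fintype X]

lemma sub_le_mul_log_div {q r : ℝ} (hq : 0 ≤ q) (hr : 0 ≤ r) (hrq : r = 0 → q = 0) :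
    q - r ≤ q * log (q / r) := by
  rcases hq.eq_or_lt with rfl | hq
  · simpa using hr
  have hr : 0 < r := hr.lt_of_ne fun h => hq.ne' (hrq h.symm)
  have h := one_sub_inv_le_log_of_pos (div_pos hq hr)
  rw [inv_div] at h
  calc q - r = q * (1 - r / q) := by field_simp
    _ ≤ q * log (q / r) := mul_le_mul_of_nonneg_left h hq.le

theorem klDiv_nonneg {Q R : X → ℝ} (hQ : ∀ x, 0 ≤ Q x) (hR : ∀ x, 0 ≤ R x)
    (hRQ : ∀ x, R x = 0 → Q x = 0) (hsum : ∑ x, R x ≤ ∑ x, Q x) : 0 ≤ klDiv Q R :=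
  calc 0 ≤ ∑ x, (Q x - R x) := by rw [sum_sub_distrib]; linarith
    _ ≤ klDiv Q R := sum_le_sum fun x _ => sub_le_mul_log_div (hQ x) (hR x) (hRQ x)

lemma klDiv_self (Q : X → ℝ) : klDiv Q Q = 0 := by
  refine sum_eq_zero fun x _ => ?_
  rcases eq_or_ne (Q x) 0 with h | h <;> simp [h]

noncomputable def partitionFn (P f : X → ℝ) : ℝ := ∑ x, P x * exp (f x)

noncomputable def tilt (P f : X → ℝ) (x : X) : ℝ := P x * exp (f x) / partitionFn P f

variable {P f : X → ℝ}

lemma tilt_nonneg (hP : ∀ x, 0 ≤ P x) (hZ : 0 < partitionFn P f) (x : X) : 0 ≤ tilt P f x :=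
  div_nonneg (mul_nonneg (hP x) (exp_pos _).le) hZ.le

lemma tilt_eq_zero_iff (hZ : partitionFn P f ≠ 0) {x : X} : tilt P f x = 0 ↔ P x = 0 := by
  simp [tilt, hZ, (exp_pos _).ne']

lemma sum_tilt (hZ : partitionFn P f ≠ 0) : ∑ x, tilt P f x = 1 := by
  simp only [tilt, ← sum_div]
  exact div_self hZ

theorem klDiv_eq_klDiv_tilt_add {Q : X → ℝ} (hZ : partitionFn P f ≠ 0)
    (hQP : ∀ x, P x = 0 → Q x = 0) (hQ1 : ∑ x, Q x = 1) :
    klDiv Q P = klDiv Q (tilt P f) + ∑ x, Q x * f x - log (partitionFn P f) := by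
  have hpoint : ∀ x, Q x * log (Q x / P x)
      = Q x * log (Q x / tilt P f x) + (Q x * f x - Q x * log (partitionFn P f)) := by
    intro x
    rcases eq_or_ne (Q x) 0 with hQx | hQx
    · simp [hQx]
    have hPx : P x ≠ 0 := fun h => hQx (hQP x h)
    have htilt : tilt P f x ≠ 0 := fun h => hPx ((tilt_eq_zero_iff hZ).1 h)
    have hsplit : Q x / P x = Q x / tilt P f x * (exp (f x) / partitionFn P f) := by
      simp only [tilt]; field_simp
    rw [hsplit, log_mul (div_ne_zero hQx htilt) (div_ne_zero (exp_pos _).ne' hZ),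
      log_div (exp_pos _).ne' hZ, log_exp]
    ring
  rw [klDiv, klDiv, sum_congr rfl fun x _ => hpoint x, sum_add_distrib, sum_sub_distrib,
    ← sum_mul, hQ1, one_mul, add_sub_assoc]

lemma klDiv_tilt (hZ : partitionFn P f ≠ 0) :
    klDiv (tilt P f) P = ∑ x, tilt P f x * f x - log (partitionFn P f) := by
  rw [klDiv_eq_klDiv_tilt_add hZ (fun x => (tilt_eq_zero_iff hZ).2) (sum_tilt hZ), klDiv_self,
    zero_add]

lemma sub_log_partitionFn_le_klDiv {Q : X → ℝ} (hP : ∀ x, 0 ≤ P x) (hZ : 0 < partitionFn P f)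
    (hQ : ∀ x, 0 ≤ Q x) (hQP : ∀ x, P x = 0 → Q x = 0) (hQ1 : ∑ x, Q x = 1) :
    ∑ x, Q x * f x - log (partitionFn P f) ≤ klDiv Q P := by
  have hgibbs : 0 ≤ klDiv Q (tilt P f) :=
    klDiv_nonneg hQ (tilt_nonneg hP hZ) (fun x h => hQP x ((tilt_eq_zero_iff hZ.ne').1 h))
      (by rw [sum_tilt hZ.ne', hQ1])
  rw [klDiv_eq_klDiv_tilt_add hZ.ne' hQP hQ1]
  linarith

end Tilt

section LinearConstraint

variable {X : Type*} [Fintype X] {P g : X → ℝ} {lam : ℝ}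

theorem neg_log_partitionFn_le_klDiv {Q : X → ℝ} (hP : ∀ x, 0 ≤ P x)
    (hZ : 0 < partitionFn P fun x => lam * g x) (hlam : 0 ≤ lam)
    (hQ : ∀ x, 0 ≤ Q x) (hQ1 : ∑ x, Q x = 1) (hQP : ∀ x, P x = 0 → Q x = 0)
    (hgQ : 0 ≤ ∑ x, g x * Q x) :
    -log (partitionFn P fun x => lam * g x) ≤ klDiv Q P := by
  have hmean : ∑ x, Q x * (lam * g x) = lam * ∑ x, g x * Q x := by
    rw [mul_sum]
    exact sum_congr rfl fun x _ => by ring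
  have hbound := sub_log_partitionFn_le_klDiv hP hZ hQ hQP hQ1
  rw [hmean] at hbound
  linarith [mul_nonneg hlam hgQ]

lemma klDiv_tilt_of_sum_mul_tilt_eq_zero (hZ : (partitionFn P fun x => lam * g x) ≠ 0)
    (hbal : ∑ x, g x * tilt P (fun x => lam * g x) x = 0) :
    klDiv (tilt P fun x => lam * g x) P = -log (partitionFn P fun x => lam * g x) := by
  have hmean : ∑ x, tilt P (fun x => lam * g x) x * (lam * g x) = 0 := by
    rw [← mul_zero lam, ← hbal, mul_sum]
    exact sum_congr rfl fun x _ => by ring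
  rw [klDiv_tilt hZ, hmean, zero_sub]

end LinearConstraint

lemma exp_half_log_div_mul {a b : ℝ} (ha : 0 < a) (hb : 0 < b) :
    exp (1 / 2 * log (b / a)) * a = √(a * b) := by
  rw [sqrt_eq_rpow, rpow_def_of_pos (mul_pos ha hb), log_div hb.ne' ha.ne',
    log_mul ha.ne' hb.ne']
  nth_rewrite 2 [← exp_log ha]
  rw [← exp_add]
  ring_nf

section Ternary

variable {X : Type*} [Fintype X] {g : X → ℝ}

noncomputable def fiberMass (g P : X → ℝ) (a : ℝ) : ℝ :=
  ∑ x ∈ univ.filter (fun x => g x = a), P x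

lemma sum_mul_comp_eq_of_ternary (hg : ∀ x, g x = -1 ∨ g x = 0 ∨ g x = 1) (F : X → ℝ)
    (h : ℝ → ℝ) : ∑ x, F x * h (g x)
      = fiberMass g F 1 * h 1 + fiberMass g F 0 * h 0 + fiberMass g F (-1) * h (-1) := by
  simp only [fiberMass, sum_mul, sum_filter, ← sum_add_distrib]
  refine sum_congr rfl fun x _ => ?_
  rcases hg x with hx | hx | hx <;> norm_num [hx]

lemma sum_mul_eq_fiberMass_sub (hg : ∀ x, g x = -1 ∨ g x = 0 ∨ g x = 1) (Q : X → ℝ) :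
    ∑ x, g x * Q x = fiberMass g Q 1 - fiberMass g Q (-1) := by
  have h := sum_mul_comp_eq_of_ternary hg Q id
  simp only [id, mul_comm (Q _)] at h
  rw [h]
  ring

noncomputable def balancingParam (g P : X → ℝ) : ℝ :=
  1 / 2 * log (fiberMass g P (-1) / fiberMass g P 1)

variable {P : X → ℝ}

lemma exp_balancingParam_mul (hp1 : 0 < fiberMass g P 1) (hpm : 0 < fiberMass g P (-1)) :
    exp (balancingParam g P) * fiberMass g P 1
    = √(fiberMass g P 1 * fiberMass g P (-1)) :=
  exp_half_log_div_mul hp1 hpm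

lemma exp_neg_balancingParam_mul (hp1 : 0 < fiberMass g P 1) (hpm : 0 < fiberMass g P (-1)) :
    exp (-balancingParam g P) * fiberMass g P (-1)
    = √(fiberMass g P 1 * fiberMass g P (-1)) := by
  rw [balancingParam, ← mul_neg, ← log_inv, inv_div, mul_comm (fiberMass g P 1)]
  exact exp_half_log_div_mul hpm hp1

lemma partitionFn_balancingParam (hg : ∀ x, g x = -1 ∨ g x = 0 ∨ g x = 1)
    (hp1 : 0 < fiberMass g P 1) (hpm : 0 < fiberMass g P (-1)) :
    (partitionFn P fun x => balancingParam g P * g x)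
      = fiberMass g P 0 + 2 * √(fiberMass g P 1 * fiberMass g P (-1)) := by
  rw [partitionFn, sum_mul_comp_eq_of_ternary hg P fun t => exp (balancingParam g P * t)]
  simp only [mul_one, mul_zero, exp_zero, mul_neg]
  rw [mul_comm (fiberMass g P 1), exp_balancingParam_mul hp1 hpm, mul_comm (fiberMass g P (-1)),
    exp_neg_balancingParam_mul hp1 hpm]
  ring

lemma sum_mul_tilt_balancingParam (hg : ∀ x, g x = -1 ∨ g x = 0 ∨ g x = 1)
    (hp1 : 0 < fiberMass g P 1) (hpm : 0 < fiberMass g P (-1)) :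
    ∑ x, g x * tilt P (fun x => balancingParam g P * g x) x = 0 := by
  set Z := partitionFn P fun x => balancingParam g P * g x
  have h := sum_mul_comp_eq_of_ternary hg P fun t => t * exp (balancingParam g P * t) / Z
  simp only [mul_one, mul_zero, mul_neg, zero_mul, zero_div, add_zero] at h
  calc ∑ x, g x * tilt P (fun x => balancingParam g P * g x) x
      = ∑ x, P x * (g x * exp (balancingParam g P * g x) / Z) :=
        sum_congr rfl fun x _ => by simp only [tilt]; ring
    _ = 0 := by
      rw [h]
      linear_combination
        (exp_balancingParam_mul hp1 hpm - exp_neg_balancingParam_mul hp1 hpm) / Z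

lemma balancingParam_nonneg (hp1 : 0 < fiberMass g P 1)
    (hle : fiberMass g P 1 ≤ fiberMass g P (-1)) : 0 ≤ balancingParam g P :=
  mul_nonneg (by norm_num) (log_nonneg ((one_le_div hp1).2 hle))

end Ternary

theorem stmt5_general {X : Type*} [Fintype X] (P : X → ℝ) (g : X → ℝ)
    (hP0 : ∀ x, 0 ≤ P x)
    (hg : ∀ x, g x = -1 ∨ g x = 0 ∨ g x = 1)
    (hpos : 0 < ∑ x ∈ Finset.univ.filter (fun x => g x = 1), P x)
    (hneg : ∑ x : X, g x * P x < 0) :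
    IsLeast { d : ℝ | ∃ Q : X → ℝ, (∀ x, 0 ≤ Q x) ∧ (∑ x : X, Q x = 1) ∧
        (∀ x, P x = 0 → Q x = 0) ∧ (0 ≤ ∑ x : X, g x * Q x) ∧ d = klDiv Q P }
      (-Real.log ((∑ x ∈ Finset.univ.filter (fun x => g x = 0), P x)
        + 2 * Real.sqrt ((∑ x ∈ Finset.univ.filter (fun x => g x = 1), P x)
          * (∑ x ∈ Finset.univ.filter (fun x => g x = -1), P x)))) ∧
    (letI lam : ℝ := (1 / 2) * Real.log
        ((∑ x ∈ Finset.univ.filter (fun x => g x = -1), P x)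
          / (∑ x ∈ Finset.univ.filter (fun x => g x = 1), P x))
     letI Qstar : X → ℝ := fun x =>
        P x * Real.exp (lam * g x) / (∑ y : X, P y * Real.exp (lam * g y))
     (∀ x, 0 ≤ Qstar x) ∧ (∑ x : X, Qstar x = 1) ∧ (∀ x, P x = 0 → Qstar x = 0) ∧
       (0 ≤ ∑ x : X, g x * Qstar x) ∧
       klDiv Qstar P = -Real.log ((∑ x ∈ Finset.univ.filter (fun x => g x = 0), P x)
        + 2 * Real.sqrt ((∑ x ∈ Finset.univ.filter (fun x => g x = 1), P x)
          * (∑ x ∈ Finset.univ.filter (fun x => g x = -1), P x)))) := by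
  have hp1 : 0 < fiberMass g P 1 := hpos
  have hlt : fiberMass g P 1 < fiberMass g P (-1) := by
    linarith [sum_mul_eq_fiberMass_sub hg P]
  have hpm := hp1.trans hlt
  have hZ := partitionFn_balancingParam hg hp1 hpm
  have hZpos : 0 < partitionFn P fun x => balancingParam g P * g x := by
    have : 0 ≤ fiberMass g P 0 := sum_nonneg fun x _ => hP0 x
    rw [hZ]
    positivity
  have hbal := sum_mul_tilt_balancingParam hg hp1 hpm
  have hkl := klDiv_tilt_of_sum_mul_tilt_eq_zero hZpos.ne' hbal
  rw [hZ] at hkl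
  have hnonneg := tilt_nonneg hP0 hZpos
  have hsum := sum_tilt hZpos.ne'
  have hac : ∀ x, P x = 0 → tilt P _ x = 0 := fun x => (tilt_eq_zero_iff hZpos.ne').2
  refine ⟨⟨⟨_, hnonneg, hsum, hac, hbal.ge, hkl.symm⟩, ?_⟩, hnonneg, hsum, hac, hbal.ge, hkl⟩
  rintro _ ⟨Q, hQ, hQ1, hQP, hgQ, rfl⟩
  have hlower := neg_log_partitionFn_le_klDiv hP0 hZpos (balancingParam_nonneg hp1 hlt.le)
    hQ hQ1 hQP hgQ
  rw [hZ] at hlower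
  exact hlower

/-- explicit solution of the KL-divergence minimization over distributions
satisfying `∑ g·Q ≥ 0`, attained by the exponentially tilted distribution. -/
theorem stmt5 {X : Type*} [Fintype X] (P : X → ℝ) (g : X → ℝ)
    (hP0 : ∀ x, 0 ≤ P x) (hP1 : ∑ x : X, P x = 1)
    (hg : ∀ x, g x = -1 ∨ g x = 0 ∨ g x = 1)
    (hpos : 0 < ∑ x ∈ Finset.univ.filter (fun x => g x = 1), P x)
    (hneg : ∑ x : X, g x * P x < 0) :
    IsLeast { d : ℝ | ∃ Q : X → ℝ, (∀ x, 0 ≤ Q x) ∧ (∑ x : X, Q x = 1) ∧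
        (∀ x, P x = 0 → Q x = 0) ∧ (0 ≤ ∑ x : X, g x * Q x) ∧ d = klDiv Q P }
      (-Real.log ((∑ x ∈ Finset.univ.filter (fun x => g x = 0), P x)
        + 2 * Real.sqrt ((∑ x ∈ Finset.univ.filter (fun x => g x = 1), P x)
          * (∑ x ∈ Finset.univ.filter (fun x => g x = -1), P x)))) ∧
    (letI lam : ℝ := (1 / 2) * Real.log
        ((∑ x ∈ Finset.univ.filter (fun x => g x = -1), P x)
          / (∑ x ∈ Finset.univ.filter (fun x => g x = 1), P x))
     letI Qstar : X → ℝ := fun x =>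
        P x * Real.exp (lam * g x) / (∑ y : X, P y * Real.exp (lam * g y))
     (∀ x, 0 ≤ Qstar x) ∧ (∑ x : X, Qstar x = 1) ∧ (∀ x, P x = 0 → Qstar x = 0) ∧
       (0 ≤ ∑ x : X, g x * Qstar x) ∧
       klDiv Qstar P = -Real.log ((∑ x ∈ Finset.univ.filter (fun x => g x = 0), P x)
        + 2 * Real.sqrt ((∑ x ∈ Finset.univ.filter (fun x => g x = 1), P x)
          * (∑ x ∈ Finset.univ.filter (fun x => g x = -1), P x)))) :=
  stmt5_general P g hP0 hg hpos hneg
end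

section
/- Let θ ∈ (0, 1/2), let P = P_{T,θ} on {0,1}³ for the tree T with edge set {{1,2},{2,3}}, and let x_1,…,x_n be i.i.d. samples from P. Then lim_{n→∞} −(1/n)·log ℙ({Â_{1,3} ≥ Â_{1,2}} ∩ {Â_{1,3} ≥ Â_{2,3}}) = −log(1 − θ·[2 − θ − 3·θ^{1/3}·(1−θ)^{2/3}]), and this value is strictly greater than K(θ) := −log(1 − θ·(1 − √(4θ(1−θ)))). -/
open scoped Classical BigOperators
open Filter

/-!
Classify a sample `x ∈ {0,1}³` by its `pattern`: `0` if all coordinates agree, and `1`, `2`, `3`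
if only the pair `{1,2}`, `{2,3}`, resp. `{1,3}` agrees. The patterns have probabilities
`q = ((1-θ)², θ(1-θ), θ(1-θ), θ²)`, and the event says that the pattern counts satisfy
`k₁ ≤ k₃` and `k₂ ≤ k₃`. Replacing `q₁, q₂, q₃` by their geometric mean `g = θ^{4/3}(1-θ)^{2/3}`
does not decrease `q^k` on the event and does not change it on the diagonal `k₁ = k₂ = k₃`, so
the probability is at most `M^n` with `M = (1-θ)² + 3g`. Conversely, a count vector of maximal
tilted mass carries at least `M^n/(n+1)⁴`; its counts `k₁, k₂, k₃` differ by at most one, since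
moving a sample between two labels of equal weight would increase the multinomial coefficient,
and moving at most three samples to label `0` reaches the diagonal at a polynomial cost. Hence
the exponent is `-log M`. Finally `M < 1 - θ(1 - √(4θ(1-θ)))` is the strict AM-GM inequality for
`1-θ, √(θ(1-θ)), √(θ(1-θ))`.
-/

open Finset

section Counts

variable {α : Type*} [DecidableEq α] {n : ℕ}

def counts (ys : Fin n → α) (i : α) : ℕ := #{j | ys j = i}

lemma card_filter_mem_eq_sum_counts (ys : Fin n → α) (s : Finset α) :
    #{j | ys j ∈ s} = ∑ i ∈ s, counts ys i := by
  rw [card_eq_sum_card_fiberwise (f := ys) (s := {j | ys j ∈ s}) (t := s)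
    fun j hj => (mem_filter.1 hj).2]
  refine sum_congr rfl fun i hi => congrArg card ?_
  rw [filter_filter]
  exact filter_congr fun j _ => and_iff_right_of_imp fun h => h ▸ hi

end Counts

section MethodOfTypes

variable {α : Type*} [Fintype α]

/-- The probability that `n` i.i.d. samples of law `z` have count vector `k`. -/
def typeMass {R : Type*} [CommSemiring R] (z : α → R) (k : α → ℕ) : R :=
  Nat.multinomial univ k * ∏ i, z i ^ k i

lemma typeMass_nonneg {z : α → ℝ} (hz : ∀ i, 0 ≤ z i) (k : α → ℕ) : 0 ≤ typeMass z k :=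
  mul_nonneg (Nat.cast_nonneg _) (prod_nonneg fun i _ => pow_nonneg (hz i) _)

lemma typeMass_pos {z : α → ℝ} (hz : ∀ i, 0 < z i) (k : α → ℕ) : 0 < typeMass z k :=
  mul_pos (Nat.cast_pos.2 (Nat.multinomial_pos _ _)) (prod_pos fun i _ => pow_pos (hz i) _)

variable [DecidableEq α] {n : ℕ}

lemma sum_counts (ys : Fin n → α) : ∑ i, counts ys i = n := by
  have := (card_eq_sum_card_fiberwise (f := ys) (s := univ) (t := univ) fun _ _ => mem_univ _).symm
  rwa [card_univ, Fintype.card_fin] at this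

lemma counts_mem_piAntidiag (ys : Fin n → α) : counts ys ∈ piAntidiag univ n := by
  simp [sum_counts]

lemma prod_comp_eq_prod_pow_counts {M : Type*} [CommMonoid M] (z : α → M) (ys : Fin n → α) :
    ∏ j, z (ys j) = ∏ i, z i ^ counts ys i := by
  rw [prod_comp]
  refine prod_subset (subset_univ _) fun i _ hi => ?_
  rw [filter_eq_empty_iff.2 fun j _ (h : ys j = i) => hi (h ▸ mem_image_of_mem ys (mem_univ j)),
    card_empty, pow_zero]

open MvPolynomial in
/-- Read off as the coefficient of `X^k` in `(∑ i, X i) ^ n = ∑ ys, ∏ j, X (ys j)`. -/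
lemma card_counts_eq_multinomial {k : α → ℕ} (hk : ∑ i, k i = n) :
    #{ys : Fin n → α | counts ys = k} = Nat.multinomial univ k := by
  have hmono : ∀ ys : Fin n → α, ∏ j, (X (ys j) : MvPolynomial α ℕ)
      = monomial (Finsupp.equivFunOnFinite.symm (counts ys)) 1 := by
    intro ys
    rw [prod_comp_eq_prod_pow_counts, monomial_eq, C_1, one_mul,
      Finsupp.prod_fintype _ _ (by simp)]
    rfl
  have hpow : (∑ i, X i : MvPolynomial α ℕ) ^ n = ∑ ys : Fin n → α, ∏ j, X (ys j) := by
    rw [← Fin.prod_const, prod_univ_sum, Fintype.piFinset_univ]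
  have hcoeff := coeff_sum_X_pow_of_fintype (R := ℕ) (Finsupp.equivFunOnFinite.symm k) n
  rw [hpow, coeff_sum] at hcoeff
  simp_rw [hmono, coeff_monomial, EmbeddingLike.apply_eq_iff_eq, ← card_filter] at hcoeff
  rw [hcoeff, Finsupp.sum_fintype _ _ (by simp),
    Finsupp.multinomial_eq_of_support_subset (subset_univ _)]
  simp [hk]

lemma sum_typeMass {R : Type*} [CommSemiring R] (z : α → R) (n : ℕ) :
    ∑ k ∈ piAntidiag univ n, typeMass z k = (∑ i, z i) ^ n :=
  (sum_pow_eq_sum_piAntidiag _ _ _).symm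

lemma sum_mul_prod_eq_sum_typeMass {R : Type*} [CommSemiring R] (F : (α → ℕ) → R) (z : α → R) :
    ∑ ys : Fin n → α, F (counts ys) * ∏ j, z (ys j)
      = ∑ k ∈ piAntidiag univ n, F k * typeMass z k := by
  rw [← sum_fiberwise_of_maps_to fun ys _ => counts_mem_piAntidiag ys]
  refine sum_congr rfl fun k hk => ?_
  rw [sum_congr rfl fun ys hys => by rw [prod_comp_eq_prod_pow_counts, (mem_filter.1 hys).2],
    sum_const, card_counts_eq_multinomial (mem_piAntidiag.1 hk).1, nsmul_eq_mul, typeMass]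
  ring

lemma multinomial_add_single_mul (m : α → ℕ) (β : α) :
    Nat.multinomial univ (m + Pi.single β 1) * (m β + 1)
      = (∑ i, m i + 1) * Nat.multinomial univ m := by
  have hupd : m + Pi.single β 1 = Function.update m β (m β + 1) := by
    ext i; by_cases h : i = β <;> simp [h]
  have hprod : ∏ i, (Function.update m β (m β + 1) i).factorial
      = (m β + 1) * ∏ i, (m i).factorial := by
    rw [← mul_prod_erase _ _ (mem_univ β), ← mul_prod_erase _ _ (mem_univ β),
      Function.update_self, Nat.factorial_succ, mul_assoc]
    congr 2
    exact prod_congr rfl fun i hi => by rw [Function.update_of_ne (ne_of_mem_erase hi)]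
  have hsum : ∑ i, Function.update m β (m β + 1) i = ∑ i, m i + 1 := by
    rw [← hupd]; simp [sum_add_distrib]
  have hspec := Nat.multinomial_spec univ (Function.update m β (m β + 1))
  rw [hprod, hsum, Nat.factorial_succ, ← Nat.multinomial_spec univ m] at hspec
  rw [hupd]
  refine Nat.eq_of_mul_eq_mul_left (prod_pos (s := univ) fun i _ => Nat.factorial_pos (m i)) ?_
  rw [show ∀ a b c : ℕ, a * (b * c) = c * a * b from fun _ _ _ => by ring, hspec]
  ring

lemma typeMass_add_single_mul {R : Type*} [CommSemiring R] (z : α → R) (m : α → ℕ) (β : α) :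
    typeMass z (m + Pi.single β 1) * (m β + 1) = (∑ i, m i + 1) * typeMass z m * z β := by
  have hpow : ∏ i, z i ^ (m + Pi.single β 1 : α → ℕ) i = (∏ i, z i ^ m i) * z β := by
    simp only [Pi.add_apply, pow_add, prod_mul_distrib]
    congr 1
    rw [prod_eq_single β (fun i _ hi => by simp [hi]) (by simp)]
    simp
  have := congrArg (Nat.cast : ℕ → R) (multinomial_add_single_mul m β)
  push_cast at this
  rw [typeMass, typeMass, hpow, mul_right_comm, ← mul_assoc, this]
  push_cast
  ring

lemma factorial_le_factorial_mul_pow {a b N : ℕ} (haN : a ≤ N) :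
    a.factorial ≤ b.factorial * N ^ (a - b) := by
  rw [← Nat.factorial_mul_descFactorial (Nat.sub_le a b)]
  exact Nat.mul_le_mul (Nat.factorial_le (by omega))
    ((Nat.descFactorial_le_pow a _).trans (Nat.pow_le_pow_left haN _))

lemma multinomial_le_mul_pow {k k' : α → ℕ} (o : α) (hsum : ∑ i, k' i = ∑ i, k i)
    (hle : ∀ i ≠ o, k' i ≤ k i) :
    Nat.multinomial univ k ≤ Nat.multinomial univ k' * (∑ i, k i) ^ (k' o - k o) := by
  have hprod : ∏ i, (k' i).factorial ≤ (∏ i, (k i).factorial) * (∑ i, k i) ^ (k' o - k o) := by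
    rw [← mul_prod_erase _ _ (mem_univ o), ← mul_prod_erase _ _ (mem_univ o), mul_right_comm]
    refine Nat.mul_le_mul (factorial_le_factorial_mul_pow ?_)
      (prod_le_prod' fun i hi => Nat.factorial_le (hle i (ne_of_mem_erase hi)))
    exact hsum ▸ single_le_sum (fun i _ => Nat.zero_le (k' i)) (mem_univ o)
  refine Nat.le_of_mul_le_mul_left ?_ (prod_pos (s := univ) fun i _ => Nat.factorial_pos (k i))
  calc (∏ i, (k i).factorial) * Nat.multinomial univ k
      = (∏ i, (k' i).factorial) * Nat.multinomial univ k' := by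
        rw [Nat.multinomial_spec, Nat.multinomial_spec, hsum]
    _ ≤ (∏ i, (k i).factorial) * (∑ i, k i) ^ (k' o - k o) * Nat.multinomial univ k' :=
        Nat.mul_le_mul_right _ hprod
    _ = _ := by ring

lemma card_piAntidiag_univ_le (n : ℕ) :
    #(piAntidiag (univ : Finset α) n) ≤ (n + 1) ^ Fintype.card α := by
  calc #(piAntidiag (univ : Finset α) n)
      ≤ #(Fintype.piFinset fun _ : α => range (n + 1)) := by
        refine card_le_card fun k hk => Fintype.mem_piFinset.2 fun i => mem_range.2 ?_
        exact Nat.lt_succ_of_le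
          ((mem_piAntidiag.1 hk).1 ▸ single_le_sum (fun _ _ => Nat.zero_le _) (mem_univ i))
    _ = (n + 1) ^ Fintype.card α := by simp

lemma exists_maximal_typeMass [Nonempty α] {z : α → ℝ} (hz : ∀ i, 0 ≤ z i) (n : ℕ) :
    ∃ k ∈ piAntidiag univ n, (∀ k' ∈ piAntidiag univ n, typeMass z k' ≤ typeMass z k) ∧
      (∑ i, z i) ^ n ≤ ((n : ℝ) + 1) ^ Fintype.card α * typeMass z k := by
  obtain ⟨k, hk, hmax⟩ := exists_max_image (piAntidiag univ n) (typeMass z)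
    ⟨_, counts_mem_piAntidiag fun _ : Fin n => Classical.arbitrary α⟩
  refine ⟨k, hk, hmax, ?_⟩
  rw [← sum_typeMass]
  calc ∑ k' ∈ piAntidiag univ n, typeMass z k'
      ≤ #(piAntidiag (univ : Finset α) n) • typeMass z k := sum_le_card_nsmul _ _ _ hmax
    _ ≤ ((n : ℝ) + 1) ^ Fintype.card α * typeMass z k := by
        rw [nsmul_eq_mul]
        refine mul_le_mul_of_nonneg_right ?_ (typeMass_nonneg hz k)
        exact_mod_cast card_piAntidiag_univ_le n

lemma le_add_one_of_typeMass_maximal {z : α → ℝ} (hz : ∀ i, 0 < z i) {k : α → ℕ}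
    (hmax : ∀ k' ∈ piAntidiag univ n, typeMass z k' ≤ typeMass z k) (hk : k ∈ piAntidiag univ n)
    {β γ : α} (hβγ : z β = z γ) : k β ≤ k γ + 1 := by
  by_contra! h
  have hne : β ≠ γ := by rintro rfl; omega
  set m := k - Pi.single β 1
  have hkm : k = m + Pi.single β 1 := by
    ext i; by_cases hi : i = β
    · subst hi; simp only [Pi.add_apply, Pi.sub_apply, Pi.single_eq_same, m]; omega
    · simp [m, hi]
  have hk' : m + Pi.single γ 1 ∈ piAntidiag univ n := by
    rw [mem_piAntidiag] at hk ⊢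
    refine ⟨?_, fun i _ => mem_univ i⟩
    rw [← hk.1, hkm]; simp [sum_add_distrib]
  have hmass := typeMass_add_single_mul z m β
  rw [← hkm, hβγ, ← typeMass_add_single_mul z m γ] at hmass
  have hmβ : (m β : ℝ) + 1 = k β := by rw [hkm]; simp
  have hmγ : m γ = k γ := by simp [m, hne.symm]
  rw [hmβ, hmγ] at hmass
  have hlt : (k γ : ℝ) + 1 < k β := by exact_mod_cast h
  have := hmax _ hk'
  have := typeMass_pos hz (m + Pi.single γ 1)
  nlinarith

end MethodOfTypes

lemma iidProb_counts_mem {p : ℕ} {β : Type*} [Fintype β] [DecidableEq β]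
    (P : (Fin p → Bool) → ℝ) (f : (Fin p → Bool) → β) (n : ℕ) (E : Set (β → ℕ)) :
    iidProb P n {xs | counts (fun j => f (xs j)) ∈ E}
      = ∑ k ∈ piAntidiag univ n with k ∈ E, typeMass (fun b => ∑ x with f x = b, P x) k := by
  have hfiber : ∀ ys : Fin n → β, ∏ j, ∑ x with f x = ys j, P x
      = ∑ xs : Fin n → Fin p → Bool with (fun j => f (xs j)) = ys, ∏ j, P (xs j) := by
    intro ys
    rw [prod_univ_sum]
    congr 1
    ext xs
    simp [funext_iff]
  rw [iidProb, sum_filter, ← sum_fiberwise_of_maps_to (g := fun xs j => f (xs j)) (t := univ)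
    fun _ _ => mem_univ _]
  calc _ = ∑ ys : Fin n → β,
          (if counts ys ∈ E then (1 : ℝ) else 0) * ∏ j, ∑ x with f x = ys j, P x := by
        refine sum_congr rfl fun ys _ => ?_
        rw [hfiber, mul_sum]
        refine sum_congr rfl fun xs hxs => ?_
        simp only [Set.mem_ofPred_eq, (mem_filter.1 hxs).2, ite_mul, one_mul, zero_mul]
    _ = _ := by
        rw [sum_mul_prod_eq_sum_typeMass (fun k => if k ∈ E then (1 : ℝ) else 0)
          (fun b => ∑ x with f x = b, P x)]
        simp only [ite_mul, one_mul, zero_mul]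

lemma Ahat_le_Ahat_iff {p n : ℕ} (xs : Fin n → Fin p → Bool) (a b c d : Fin p) :
    Ahat xs a b ≤ Ahat xs c d ↔ #{j | xs j a = xs j b} ≤ #{j | xs j c = xs j d} := by
  rcases n.eq_zero_or_pos with rfl | hn
  · simp [Ahat]
  · rw [Ahat, Ahat, div_le_div_iff_of_pos_right (by exact_mod_cast hn), Nat.cast_le]

lemma prod_pow_vec_four (a b c e : ℝ) (k : Fin 4 → ℕ) :
    ∏ i, (![a, b, c, e] : Fin 4 → ℝ) i ^ k i = a ^ k 0 * b ^ k 1 * c ^ k 2 * e ^ k 3 := by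
  simp [Fin.prod_univ_four]

lemma sum_vec_four (a b c e : ℝ) : ∑ i, (![a, b, c, e] : Fin 4 → ℝ) i = a + b + c + e := by
  simp [Fin.sum_univ_four]

lemma typeMass_le_typeMass_diag {a t : ℝ} (ha : 0 < a) (ht : 0 < t) {n : ℕ} {k : Fin 4 → ℕ}
    (hk : k ∈ piAntidiag univ n) {d : ℕ} (hd : ∀ i ≠ 0, d ≤ k i) :
    typeMass ![a, t, t, t] k * (a / (a + t)) ^ (k 1 + k 2 + k 3 - 3 * d)
      ≤ ((n : ℝ) + 1) ^ (k 1 + k 2 + k 3 - 3 * d)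
        * typeMass ![a, t, t, t] ![n - 3 * d, d, d, d] := by
  have hsum : k 0 + k 1 + k 2 + k 3 = n := by
    simpa [Fin.sum_univ_four] using (mem_piAntidiag.1 hk).1
  have hd1 := hd 1 (by decide); have hd2 := hd 2 (by decide); have hd3 := hd 3 (by decide)
  set s := k 1 + k 2 + k 3 - 3 * d
  have hmult := multinomial_le_mul_pow (k := k) (k' := ![n - 3 * d, d, d, d]) 0
    (by simp only [Fin.sum_univ_four, Matrix.cons_val]; omega)
    (fun i hi => by fin_cases i <;> simp_all)
  rw [show ∑ i, k i = n by simpa using (mem_piAntidiag.1 hk).1,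
    show (![n - 3 * d, d, d, d] : Fin 4 → ℕ) 0 - k 0 = s by
      simp only [Matrix.cons_val]; omega] at hmult
  have hmultR : (Nat.multinomial univ k : ℝ)
      ≤ Nat.multinomial univ ![n - 3 * d, d, d, d] * (n : ℝ) ^ s := by
    exact_mod_cast hmult
  set W := a ^ (n - 3 * d) * t ^ d * t ^ d * t ^ d
  have hweight :
      a ^ k 0 * t ^ k 1 * t ^ k 2 * t ^ k 3 * (a / (a + t)) ^ s = W * (t / (a + t)) ^ s := by
    calc _ = a ^ (k 0 + s) * t ^ (k 1 + k 2 + k 3) / (a + t) ^ s := by rw [div_pow]; ring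
      _ = a ^ (n - 3 * d) * t ^ (d + d + d + s) / (a + t) ^ s := by
        rw [show k 0 + s = n - 3 * d by omega, show k 1 + k 2 + k 3 = d + d + d + s by omega]
      _ = _ := by rw [div_pow]; ring
  have hratio : (n : ℝ) ^ s * (t / (a + t)) ^ s ≤ ((n : ℝ) + 1) ^ s := by
    rw [← mul_pow]
    refine pow_le_pow_left₀ (by positivity) ?_ s
    have : t / (a + t) ≤ 1 := (div_le_one (by positivity)).2 (by linarith)
    nlinarith [Nat.cast_nonneg (α := ℝ) n]
  rw [typeMass, typeMass, prod_pow_vec_four, prod_pow_vec_four, mul_assoc, hweight]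
  simp only [Matrix.cons_val]
  calc (Nat.multinomial univ k : ℝ) * (W * (t / (a + t)) ^ s)
      ≤ Nat.multinomial univ ![n - 3 * d, d, d, d] * (n : ℝ) ^ s * (W * (t / (a + t)) ^ s) :=
        mul_le_mul_of_nonneg_right hmultR (by positivity)
    _ = (n : ℝ) ^ s * (t / (a + t)) ^ s * (Nat.multinomial univ ![n - 3 * d, d, d, d] * W) := by
        ring
    _ ≤ _ := mul_le_mul_of_nonneg_right hratio (by positivity)

lemma exists_diag_typeMass_ge {a t : ℝ} (ha : 0 < a) (ht : 0 < t) (n : ℕ) :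
    ∃ d, 3 * d ≤ n ∧ (a / (a + t)) ^ 3 * (a + 3 * t) ^ n
      ≤ ((n : ℝ) + 1) ^ 7 * typeMass ![a, t, t, t] ![n - 3 * d, d, d, d] := by
  have hz : ∀ i, 0 < (![a, t, t, t] : Fin 4 → ℝ) i := by intro i; fin_cases i <;> simp [ha, ht]
  obtain ⟨k, hk, hmax, hbound⟩ := exists_maximal_typeMass (fun i => (hz i).le) n
  have hbal : ∀ β γ : Fin 4, β ≠ 0 → γ ≠ 0 → k β ≤ k γ + 1 := fun β γ hβ hγ =>
    le_add_one_of_typeMass_maximal hz hmax hk (by fin_cases β <;> fin_cases γ <;> simp_all)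
  have hsum : k 0 + k 1 + k 2 + k 3 = n := by
    simpa [Fin.sum_univ_four] using (mem_piAntidiag.1 hk).1
  have h12 := hbal 1 2 (by decide) (by decide); have h21 := hbal 2 1 (by decide) (by decide)
  have h13 := hbal 1 3 (by decide) (by decide); have h31 := hbal 3 1 (by decide) (by decide)
  have h23 := hbal 2 3 (by decide) (by decide); have h32 := hbal 3 2 (by decide) (by decide)
  set d := min (k 1) (min (k 2) (k 3))
  have hs : k 1 + k 2 + k 3 - 3 * d ≤ 3 := by omega
  refine ⟨d, by omega, ?_⟩
  have hdiag := typeMass_le_typeMass_diag ha ht hk (d := d) fun i hi => by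
    fin_cases i <;> simp_all <;> omega
  have hc : a / (a + t) ≤ 1 := (div_le_one (by positivity)).2 (by linarith)
  have hpow :
      ((n : ℝ) + 1) ^ 4 * ((n : ℝ) + 1) ^ (k 1 + k 2 + k 3 - 3 * d) ≤ ((n : ℝ) + 1) ^ 7 := by
    rw [← pow_add]; exact pow_le_pow_right₀ (by linarith [Nat.cast_nonneg (α := ℝ) n]) (by omega)
  have hT := typeMass_nonneg (fun i => (hz i).le) k
  rw [sum_vec_four, Fintype.card_fin, show a + t + t + t = a + 3 * t by ring] at hbound
  calc (a / (a + t)) ^ 3 * (a + 3 * t) ^ n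
      ≤ (a / (a + t)) ^ 3 * (((n : ℝ) + 1) ^ 4 * typeMass ![a, t, t, t] k) := by
        gcongr
    _ ≤ ((n : ℝ) + 1) ^ 4
          * (typeMass ![a, t, t, t] k * (a / (a + t)) ^ (k 1 + k 2 + k 3 - 3 * d)) := by
        rw [mul_left_comm, mul_comm ((a / (a + t)) ^ 3)]
        exact mul_le_mul_of_nonneg_left
          (mul_le_mul_of_nonneg_left (pow_le_pow_of_le_one (by positivity) hc hs) hT)
          (by positivity)
    _ ≤ ((n : ℝ) + 1) ^ 4 * (((n : ℝ) + 1) ^ (k 1 + k 2 + k 3 - 3 * d)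
          * typeMass ![a, t, t, t] ![n - 3 * d, d, d, d]) := by
        gcongr
    _ ≤ _ := by
        rw [← mul_assoc]
        exact mul_le_mul_of_nonneg_right hpow (typeMass_nonneg (fun i => (hz i).le) _)

lemma pow_mul_pow_mul_pow_le_pow_of_mul_eq {q₁ q₂ q₃ t : ℝ} (ht : 0 < t) (h₁ : t ≤ q₁)
    (h₂ : t ≤ q₂) (h : q₁ * q₂ * q₃ = t ^ 3) {k₁ k₂ k₃ : ℕ} (hk₁ : k₁ ≤ k₃) (hk₂ : k₂ ≤ k₃) :
    q₁ ^ k₁ * q₂ ^ k₂ * q₃ ^ k₃ ≤ t ^ (k₁ + k₂ + k₃) := by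
  obtain ⟨i, hi⟩ := Nat.exists_eq_add_of_le hk₁
  obtain ⟨j, hj⟩ := Nat.exists_eq_add_of_le hk₂
  have hpos : 0 < q₁ ^ i * q₂ ^ j := by
    have := ht.trans_le h₁; have := ht.trans_le h₂; positivity
  refine le_of_mul_le_mul_right ?_ hpos
  calc q₁ ^ k₁ * q₂ ^ k₂ * q₃ ^ k₃ * (q₁ ^ i * q₂ ^ j)
      = q₁ ^ (k₁ + i) * q₂ ^ (k₂ + j) * q₃ ^ k₃ := by ring
    _ = t ^ (k₁ + k₂ + k₃) * (t ^ i * t ^ j) := by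
      rw [← hi, ← hj, ← mul_pow, ← mul_pow, h, ← pow_mul, ← pow_add, ← pow_add]
      congr 1; omega
    _ ≤ t ^ (k₁ + k₂ + k₃) * (q₁ ^ i * q₂ ^ j) :=
      mul_le_mul_of_nonneg_left (mul_le_mul (pow_le_pow_left₀ ht.le h₁ i)
        (pow_le_pow_left₀ ht.le h₂ j) (by positivity) (pow_nonneg (ht.le.trans h₁) i))
        (by positivity)

lemma three_mul_lt_add_two_mul_of_pow_three_eq {a b c : ℝ} (ha : 0 ≤ a) (hb : 0 ≤ b)
    (hab : a ≠ b) (hc : c ^ 3 = a * b ^ 2) : 3 * c < a + 2 * b := by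
  have hsq : 0 < (a - b) ^ 2 := by positivity [sub_ne_zero.2 hab]
  have hpos : 0 < a + 8 * b := by
    rcases ha.lt_or_eq with ha | rfl
    · linarith
    · exact lt_of_le_of_ne (by linarith) (by intro h; apply hab; linarith)
  refine lt_of_pow_lt_pow_left₀ 3 (by linarith) ?_
  nlinarith [mul_pos hsq hpos]

lemma tendsto_log_add_one_div_atTop :
    Tendsto (fun n : ℕ => Real.log ((n : ℝ) + 1) / n) atTop (nhds 0) := by
  have h := (Real.tendsto_pow_log_div_mul_add_atTop 1 (-1) 1 one_ne_zero).comp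
    (tendsto_atTop_add_const_right atTop 1 tendsto_natCast_atTop_atTop)
  refine h.congr fun n => ?_
  simp

lemma tendsto_neg_inv_mul_log_of_pow_bounds {u : ℕ → ℝ} {M c : ℝ} (hM : 0 < M) (hc : 0 < c)
    (r : ℕ) (hlow : ∀ n : ℕ, c * M ^ n ≤ ((n : ℝ) + 1) ^ r * u n) (hup : ∀ n, u n ≤ M ^ n) :
    Tendsto (fun n : ℕ => -(1 / (n : ℝ)) * Real.log (u n)) atTop (nhds (-Real.log M)) := by
  have herr : Tendsto
      (fun n : ℕ => -Real.log M + (r * (Real.log ((n : ℝ) + 1) / n) - Real.log c / n))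
      atTop (nhds (-Real.log M)) := by
    simpa using ((tendsto_log_add_one_div_atTop.const_mul (r : ℝ)).sub
      (tendsto_const_div_atTop_nhds_zero_nat (Real.log c))).const_add (-Real.log M)
  have hbounds : ∀ n : ℕ, 1 ≤ n → -Real.log M ≤ -(1 / (n : ℝ)) * Real.log (u n) ∧
      -(1 / (n : ℝ)) * Real.log (u n)
        ≤ -Real.log M + (r * (Real.log ((n : ℝ) + 1) / n) - Real.log c / n) := by
    intro n hn
    have hn' : (0 : ℝ) < n := by exact_mod_cast hn
    have hu : 0 < u n :=
      pos_of_mul_pos_right ((by positivity : 0 < c * M ^ n).trans_le (hlow n)) (by positivity)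
    have hupper := Real.log_le_log hu (hup n)
    have hlower := Real.log_le_log (by positivity) (hlow n)
    rw [Real.log_pow] at hupper
    rw [Real.log_mul hc.ne' (by positivity), Real.log_mul (by positivity) hu.ne', Real.log_pow,
      Real.log_pow] at hlower
    constructor
    · rw [neg_mul, neg_le_neg_iff, one_div_mul_eq_div, div_le_iff₀ hn']
      linarith
    · rw [← sub_nonneg]
      have : -Real.log M + (r * (Real.log ((n : ℝ) + 1) / n) - Real.log c / n)
          - -(1 / (n : ℝ)) * Real.log (u n)
          = (r * Real.log ((n : ℝ) + 1) + Real.log (u n) - (Real.log c + n * Real.log M)) / n := by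
        field_simp; ring
      rw [this]
      exact div_nonneg (by linarith) hn'.le
  refine tendsto_of_tendsto_of_tendsto_of_le_of_le' tendsto_const_nhds herr ?_ ?_ <;>
    filter_upwards [eventually_ge_atTop 1] with n hn
  exacts [(hbounds n hn).1, (hbounds n hn).2]

def pattern (x : Fin 3 → Bool) : Fin 4 :=
  if x 0 = x 1 then (if x 1 = x 2 then 0 else 1) else (if x 1 = x 2 then 2 else 3)

def patternProb (θ : ℝ) : Fin 4 → ℝ := ![(1 - θ) ^ 2, θ * (1 - θ), θ * (1 - θ), θ ^ 2]

/-- The geometric mean of `patternProb θ 1`, `patternProb θ 2` and `patternProb θ 3`. -/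
noncomputable def patternGeomMean (θ : ℝ) : ℝ := θ * (θ ^ ((1 : ℝ) / 3) * (1 - θ) ^ ((2 : ℝ) / 3))

noncomputable def tiltedProb (θ : ℝ) : Fin 4 → ℝ :=
  ![(1 - θ) ^ 2, patternGeomMean θ, patternGeomMean θ, patternGeomMean θ]

lemma card_agree_eq_sum_counts {n : ℕ} (xs : Fin n → Fin 3 → Bool) {a b : Fin 3}
    {s : Finset (Fin 4)} (h : ∀ x : Fin 3 → Bool, x a = x b ↔ pattern x ∈ s) :
    #{j | xs j a = xs j b} = ∑ i ∈ s, counts (fun j => pattern (xs j)) i := by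
  rw [← card_filter_mem_eq_sum_counts]
  exact congrArg card (filter_congr fun j _ => h (xs j))

lemma crossover_iff_counts {n : ℕ} (xs : Fin n → Fin 3 → Bool) :
    (Ahat xs 0 1 ≤ Ahat xs 0 2 ∧ Ahat xs 1 2 ≤ Ahat xs 0 2)
      ↔ counts (fun j => pattern (xs j)) ∈ {k : Fin 4 → ℕ | k 1 ≤ k 3 ∧ k 2 ≤ k 3} := by
  rw [Ahat_le_Ahat_iff, Ahat_le_Ahat_iff,
    card_agree_eq_sum_counts xs (a := 0) (b := 1) (s := {0, 1}) (by decide),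
    card_agree_eq_sum_counts xs (a := 1) (b := 2) (s := {0, 2}) (by decide),
    card_agree_eq_sum_counts xs (a := 0) (b := 2) (s := {0, 3}) (by decide)]
  simp only [Set.mem_ofPred_eq, sum_pair (by decide : (0 : Fin 4) ≠ 1),
    sum_pair (by decide : (0 : Fin 4) ≠ 2), sum_pair (by decide : (0 : Fin 4) ≠ 3)]
  omega

lemma edgeFinset_chainA : chainA.edgeFinset = {s(0, 1), s(1, 2)} := by
  ext e
  induction e using Sym2.ind with
  | _ i j =>
    rw [SimpleGraph.mem_edgeFinset, chainA, SimpleGraph.edgeSet_fromEdgeSet]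
    fin_cases i <;> fin_cases j <;> simp

lemma isingP_chainA (θ : ℝ) (x : Fin 3 → Bool) :
    isingP θ chainA x = patternProb θ (pattern x) / 2 := by
  rw [isingP, edgeFinset_chainA, prod_pair (by decide)]
  show 1 / 2 * ((if x 0 = x 1 then 1 - θ else θ) * (if x 1 = x 2 then 1 - θ else θ)) = _
  unfold pattern
  split_ifs <;> simp [patternProb] <;> ring

lemma sum_isingP_chainA_pattern (θ : ℝ) (i : Fin 4) :
    ∑ x with pattern x = i, isingP θ chainA x = patternProb θ i := by
  have hcard : ∀ i : Fin 4, #{x : Fin 3 → Bool | pattern x = i} = 2 := by decide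
  rw [sum_congr rfl fun x hx => by rw [isingP_chainA, (mem_filter.1 hx).2], sum_const, hcard,
    nsmul_eq_mul]
  ring

lemma iidProb_crossover_chainA (θ : ℝ) (n : ℕ) :
    iidProb (isingP θ chainA) n {xs | Ahat xs 0 1 ≤ Ahat xs 0 2 ∧ Ahat xs 1 2 ≤ Ahat xs 0 2}
      = ∑ k ∈ piAntidiag univ n with k 1 ≤ k 3 ∧ k 2 ≤ k 3, typeMass (patternProb θ) k := by
  have hE : {xs : Fin n → Fin 3 → Bool | Ahat xs 0 1 ≤ Ahat xs 0 2 ∧ Ahat xs 1 2 ≤ Ahat xs 0 2}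
      = {xs | counts (fun j => pattern (xs j)) ∈ {k : Fin 4 → ℕ | k 1 ≤ k 3 ∧ k 2 ≤ k 3}} :=
    Set.ext crossover_iff_counts
  rw [hE, iidProb_counts_mem]
  simp only [sum_isingP_chainA_pattern, Set.mem_ofPred_eq]

section Chain

variable {θ : ℝ}

lemma rpow_one_third_mul_rpow_two_thirds_pow_three (hθ0 : 0 ≤ θ) (hθ1 : θ ≤ 1) :
    (θ ^ ((1 : ℝ) / 3) * (1 - θ) ^ ((2 : ℝ) / 3)) ^ 3 = θ * (1 - θ) ^ 2 := by
  have h1 : (θ ^ ((1 : ℝ) / 3)) ^ 3 = θ := by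
    rw [← Real.rpow_natCast, ← Real.rpow_mul hθ0]; norm_num
  have h2 : ((1 - θ) ^ ((2 : ℝ) / 3)) ^ 3 = (1 - θ) ^ 2 := by
    rw [← Real.rpow_natCast, ← Real.rpow_mul (by linarith)]; norm_num
  rw [mul_pow, h1, h2]

lemma patternGeomMean_pos (hθ0 : 0 < θ) (hθ1 : θ < 1) : 0 < patternGeomMean θ := by
  have : 0 < 1 - θ := by linarith
  unfold patternGeomMean; positivity

lemma patternGeomMean_pow_three (hθ0 : 0 ≤ θ) (hθ1 : θ ≤ 1) :
    patternGeomMean θ ^ 3 = θ * (1 - θ) * (θ * (1 - θ)) * θ ^ 2 := by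
  rw [patternGeomMean, mul_pow, rpow_one_third_mul_rpow_two_thirds_pow_three hθ0 hθ1]; ring

lemma patternGeomMean_le (hθ0 : 0 ≤ θ) (hθ1 : θ ≤ 1 / 2) : patternGeomMean θ ≤ θ * (1 - θ) := by
  refine le_of_pow_le_pow_left₀ (n := 3) (by norm_num) (by nlinarith) ?_
  rw [patternGeomMean_pow_three hθ0 (by linarith)]
  have : 0 ≤ θ * (1 - θ) := by nlinarith
  nlinarith [mul_nonneg (mul_nonneg this this) (by linarith : (0 : ℝ) ≤ 1 - 2 * θ)]

lemma sum_tiltedProb : ∑ i, tiltedProb θ i = (1 - θ) ^ 2 + 3 * patternGeomMean θ := by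
  rw [tiltedProb, sum_vec_four]; ring

lemma typeMass_patternProb_le (hθ0 : 0 < θ) (hθ1 : θ ≤ 1 / 2) {k : Fin 4 → ℕ}
    (hk : k 1 ≤ k 3 ∧ k 2 ≤ k 3) : typeMass (patternProb θ) k ≤ typeMass (tiltedProb θ) k := by
  have hgm := patternGeomMean_le hθ0.le hθ1
  have key := pow_mul_pow_mul_pow_le_pow_of_mul_eq (patternGeomMean_pos hθ0 (by linarith)) hgm
    hgm (patternGeomMean_pow_three hθ0.le (by linarith)).symm hk.1 hk.2
  rw [typeMass, typeMass, patternProb, tiltedProb, prod_pow_vec_four, prod_pow_vec_four]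
  calc (Nat.multinomial univ k : ℝ) * (((1 - θ) ^ 2) ^ k 0 * (θ * (1 - θ)) ^ k 1
        * (θ * (1 - θ)) ^ k 2 * (θ ^ 2) ^ k 3)
      = Nat.multinomial univ k * ((1 - θ) ^ 2) ^ k 0
        * ((θ * (1 - θ)) ^ k 1 * (θ * (1 - θ)) ^ k 2 * (θ ^ 2) ^ k 3) := by ring
    _ ≤ Nat.multinomial univ k * ((1 - θ) ^ 2) ^ k 0 * patternGeomMean θ ^ (k 1 + k 2 + k 3) := by
        gcongr
    _ = _ := by rw [pow_add, pow_add]; ring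

lemma typeMass_patternProb_diag (hθ0 : 0 ≤ θ) (hθ1 : θ ≤ 1) (m d : ℕ) :
    typeMass (patternProb θ) ![m, d, d, d] = typeMass (tiltedProb θ) ![m, d, d, d] := by
  rw [typeMass, typeMass, patternProb, tiltedProb, prod_pow_vec_four, prod_pow_vec_four]
  simp only [Matrix.cons_val]
  have h : (θ * (1 - θ)) ^ d * (θ * (1 - θ)) ^ d * (θ ^ 2) ^ d
      = patternGeomMean θ ^ d * patternGeomMean θ ^ d * patternGeomMean θ ^ d := by
    rw [← mul_pow, ← mul_pow, ← mul_pow, ← mul_pow, ← patternGeomMean_pow_three hθ0 hθ1]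
    ring
  linear_combination (Nat.multinomial univ ![m, d, d, d] * ((1 - θ) ^ 2) ^ m : ℝ) * h

lemma iidProb_crossover_le (hθ0 : 0 < θ) (hθ1 : θ ≤ 1 / 2) (n : ℕ) :
    iidProb (isingP θ chainA) n {xs | Ahat xs 0 1 ≤ Ahat xs 0 2 ∧ Ahat xs 1 2 ≤ Ahat xs 0 2}
      ≤ (∑ i, tiltedProb θ i) ^ n := by
  have htilt : ∀ i, 0 ≤ tiltedProb θ i := fun i => by
    fin_cases i <;> simp [tiltedProb, (patternGeomMean_pos hθ0 (by linarith)).le, sq_nonneg]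
  rw [iidProb_crossover_chainA, ← sum_typeMass]
  calc ∑ k ∈ piAntidiag univ n with k 1 ≤ k 3 ∧ k 2 ≤ k 3, typeMass (patternProb θ) k
      ≤ ∑ k ∈ piAntidiag univ n with k 1 ≤ k 3 ∧ k 2 ≤ k 3, typeMass (tiltedProb θ) k :=
        sum_le_sum fun k hk => typeMass_patternProb_le hθ0 hθ1 (mem_filter.1 hk).2
    _ ≤ ∑ k ∈ piAntidiag univ n, typeMass (tiltedProb θ) k :=
        sum_le_sum_of_subset_of_nonneg (filter_subset _ _) fun k _ _ => typeMass_nonneg htilt k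

lemma iidProb_crossover_ge (hθ0 : 0 < θ) (hθ1 : θ < 1) (n : ℕ) :
    ((1 - θ) ^ 2 / ((1 - θ) ^ 2 + patternGeomMean θ)) ^ 3 * (∑ i, tiltedProb θ i) ^ n
      ≤ ((n : ℝ) + 1) ^ 7 * iidProb (isingP θ chainA) n
        {xs | Ahat xs 0 1 ≤ Ahat xs 0 2 ∧ Ahat xs 1 2 ≤ Ahat xs 0 2} := by
  have hpp : ∀ i, 0 ≤ patternProb θ i := fun i => by
    fin_cases i <;> simp [patternProb, sq_nonneg] <;> nlinarith
  obtain ⟨d, hd, hge⟩ := exists_diag_typeMass_ge (a := (1 - θ) ^ 2) (t := patternGeomMean θ)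
    (by nlinarith) (patternGeomMean_pos hθ0 hθ1) n
  rw [sum_tiltedProb]
  refine hge.trans (mul_le_mul_of_nonneg_left ?_ (by positivity))
  rw [← tiltedProb, ← typeMass_patternProb_diag hθ0.le hθ1.le, iidProb_crossover_chainA]
  refine single_le_sum (f := typeMass (patternProb θ)) (fun k _ => typeMass_nonneg hpp k) ?_
  refine mem_filter.2 ⟨mem_piAntidiag.2 ⟨?_, fun i _ => mem_univ i⟩, le_rfl, le_rfl⟩
  simp only [Fin.sum_univ_four, Matrix.cons_val]
  omega

lemma sum_tiltedProb_lt (hθ0 : 0 < θ) (hθ1 : θ < 1 / 2) :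
    ∑ i, tiltedProb θ i < 1 - θ * (1 - Real.sqrt (4 * θ * (1 - θ))) := by
  set s := Real.sqrt (θ * (1 - θ))
  have hs : s ^ 2 = θ * (1 - θ) := Real.sq_sqrt (by nlinarith)
  have h4 : Real.sqrt (4 * θ * (1 - θ)) = 2 * s := by
    rw [mul_assoc, Real.sqrt_mul (by norm_num), show Real.sqrt 4 = 2 by
      rw [show (4 : ℝ) = 2 ^ 2 by norm_num, Real.sqrt_sq (by norm_num)]]
  have hne : 1 - θ ≠ s := by
    intro h
    have : (1 - θ) ^ 2 = θ * (1 - θ) := h ▸ hs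
    nlinarith
  have hamgm := three_mul_lt_add_two_mul_of_pow_three_eq (by linarith) (Real.sqrt_nonneg _) hne
    (by rw [rpow_one_third_mul_rpow_two_thirds_pow_three hθ0.le (by linarith), hs]; ring)
  rw [sum_tiltedProb, h4, patternGeomMean]
  nlinarith

end Chain

/-- the exact exponent of the joint crossover event
`{Â_{1,3} ≥ Â_{1,2}} ∩ {Â_{1,3} ≥ Â_{2,3}}` for the 3-node chain, and the fact that
it is strictly larger than the dominant exponent `K(θ)`. -/
theorem stmt12 (θ : ℝ) (hθ0 : 0 < θ) (hθ1 : θ < 1 / 2) :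
    Filter.Tendsto (fun n : ℕ =>
      -(1 / (n : ℝ)) * Real.log (iidProb (isingP θ chainA) n
        {xs | Ahat xs 0 1 ≤ Ahat xs 0 2 ∧ Ahat xs 1 2 ≤ Ahat xs 0 2}))
      Filter.atTop
      (nhds (-Real.log (1 - θ *
        (2 - θ - 3 * θ ^ ((1 : ℝ) / 3) * (1 - θ) ^ ((2 : ℝ) / 3))))) ∧
    (-Real.log (1 - θ * (1 - Real.sqrt (4 * θ * (1 - θ)))))
      < -Real.log (1 - θ * (2 - θ - 3 * θ ^ ((1 : ℝ) / 3) * (1 - θ) ^ ((2 : ℝ) / 3))) := by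
  have hM : 1 - θ * (2 - θ - 3 * θ ^ ((1 : ℝ) / 3) * (1 - θ) ^ ((2 : ℝ) / 3))
      = ∑ i, tiltedProb θ i := by
    rw [sum_tiltedProb, patternGeomMean]; ring
  have hg := patternGeomMean_pos hθ0 (by linarith)
  have hMpos : 0 < ∑ i, tiltedProb θ i := by rw [sum_tiltedProb]; positivity
  have hc : 0 < ((1 - θ) ^ 2 / ((1 - θ) ^ 2 + patternGeomMean θ)) ^ 3 := by
    have : 0 < 1 - θ := by linarith
    positivity
  rw [hM]
  exact ⟨tendsto_neg_inv_mul_log_of_pow_bounds hMpos hc 7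
      (iidProb_crossover_ge hθ0 (by linarith)) (iidProb_crossover_le hθ0 hθ1.le),
    neg_lt_neg (Real.log_lt_log hMpos (sum_tiltedProb_lt hθ0 hθ1))⟩
end
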